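/- The following are equivalent: (i) every prime element of C is maximal, i.e., Spec(C) = Max(C); (ii) Spec(C) with the Zariski topology is a Hausdorff space; (iii) the Zariski topology and the flat topology on Spec(C) coincide. -/

import Mathlib

/-!
Zariski-open subsets of `Spec C` are down-sets and flat-open subsets are up-sets. So if the
Zariski topology is T₁, or equals the flat topology, comparable primes are equal; as `⊤` is
compact, every prime lies below a coatom, and coatoms are prime, so every prime is maximal.

Conversely, let every prime be a coatom. If `a ≰ p` then `a ⊔ p = ⊤`, and compactness of `⊤`
gives a compact `b ≤ p` with `a ⊔ b = ⊤`, so the flat basic open `V(b)` contains `p` and misses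
`V(a)`. This shows that Zariski opens are flat open and that distinct primes have disjoint flat
neighbourhoods. The substantial point is that `V(a)`, for compact `a`, is Zariski open: it equals
`D(ρ)`, where `ρ` is the meet of the primes not above `a`. If some prime `p ≥ a` had `ρ ≤ p`, the
compact `x` for which the Zariski closure of `V(x) \ V(a)` misses `p` would form a
commutator-closed system that contains `a` and every compact `c ≰ p`, but not `⊥`. An element
maximal among those lying above no member of it is then a prime `m ≤ p` with `a ≰ m`,
contradicting `m = p`.
-/

open CompleteLattice

/-- A complete lattice equipped with a commutator operation, axiomatizing the congruence
lattice of an algebra in a semidegenerate congruence-modular variety whose compact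
congruences are closed under the commutator. -/
class CommutatorLattice (C : Type*) [CompleteLattice C] where
  comm : C → C → C
  comm_comm : ∀ a b : C, comm a b = comm b a
  comm_sSup : ∀ (s : Set C) (b : C), comm (sSup s) b = ⨆ a ∈ s, comm a b
  comm_le_inf : ∀ a b : C, comm a b ≤ a ⊓ b
  comm_top : ∀ a : C, comm a ⊤ = a
  compactlyGenerated : ∀ x : C,
    ∃ s : Set C, (∀ a ∈ s, IsCompactElement a) ∧ sSup s = x
  top_isCompact : IsCompactElement (⊤ : C)
  comm_isCompact : ∀ a b : C, IsCompactElement a → IsCompactElement b →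
    IsCompactElement (comm a b)

namespace CommutatorLattice

variable {C : Type*} [CompleteLattice C] [CommutatorLattice C]

/-- The residuation `a → b := ⨆ {c | [a,c] ≤ b}`. -/
def resid (a b : C) : C := sSup {c : C | comm a c ≤ b}

/-- The annihilator `a⊥ := a → ⊥`. -/
def ann (a : C) : C := resid a ⊥

/-- Iterated commutator: `cpow a n = [a,a]^n`, with the convention `[a,a]^0 = a`.
Note that `[a,b]^n` for `n ≥ 1` equals `cpow (comm a b) (n-1)`. -/
def cpow (a : C) : ℕ → C
  | 0 => a
  | n + 1 => comm (cpow a n) (cpow a n)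

/-- Prime elements: `p ≠ ⊤` and `[a,b] ≤ p` implies `a ≤ p` or `b ≤ p`. -/
def IsPrime (p : C) : Prop := p ≠ ⊤ ∧ ∀ a b : C, comm a b ≤ p → a ≤ p ∨ b ≤ p

/-- The radical `ρ(a) := ⨅ {p prime | a ≤ p}`. -/
def radical (a : C) : C := sInf {p : C | IsPrime p ∧ a ≤ p}

variable (C) in
/-- `C` is semiprime if `ρ(⊥) = ⊥`. -/
def Semiprime : Prop := radical (⊥ : C) = ⊥

variable (C) in
/-- Condition (⋆): for all compact `a`, `b` and all `n ≥ 1` there is `m ≥ 0` with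
`[[a,a]^m, [b,b]^m] ≤ [a,b]^n`.  Here `cpow (comm a b) n = [a,b]^(n+1)`, so `n : ℕ`
ranges exactly over the exponents `≥ 1` of the paper. -/
def Star : Prop := ∀ a b : C, IsCompactElement a → IsCompactElement b →
  ∀ n : ℕ, ∃ m : ℕ, comm (cpow a m) (cpow b m) ≤ cpow (comm a b) n

/-- Pure elements: `t ⊔ a⊥ = ⊤` for every compact `a ≤ t`. -/
def IsPure (t : C) : Prop := ∀ a : C, IsCompactElement a → a ≤ t → t ⊔ ann a = ⊤

/-- w-pure elements: `t ⊔ (a → ρ(⊥)) = ⊤` for every compact `a ≤ t`. -/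
def IsWPure (t : C) : Prop :=
  ∀ a : C, IsCompactElement a → a ≤ t → t ⊔ resid a (radical ⊥) = ⊤

/-- Complemented elements. -/
def IsComplEl (a : C) : Prop := ∃ b : C, a ⊔ b = ⊤ ∧ a ⊓ b = ⊥

/-- Regular elements: joins of sets of complemented elements. -/
def IsRegular (t : C) : Prop := ∃ S : Set C, (∀ a ∈ S, IsComplEl a) ∧ t = sSup S

/-- Max-regular elements: maximal among regular elements distinct from `⊤`. -/
def IsMaxRegular (t : C) : Prop :=
  IsRegular t ∧ t ≠ ⊤ ∧ ∀ u : C, IsRegular u → u ≠ ⊤ → t ≤ u → u = t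

/-- Maximal elements of `C \ {⊤}`. -/
def IsMaximal (p : C) : Prop := p ≠ ⊤ ∧ ∀ q : C, q ≠ ⊤ → p ≤ q → q = p

/-- Minimal primes. -/
def IsMinPrime (p : C) : Prop := IsPrime p ∧ ∀ q : C, IsPrime q → q ≤ p → q = p

variable (C) in
/-- `C` is mp if every prime lies above a unique minimal prime. -/
def MP : Prop := ∀ p : C, IsPrime p → ∃! q : C, IsMinPrime q ∧ q ≤ p

variable (C) in
/-- `C` is PF if `a⊥` is pure for every compact `a`. -/
def PF : Prop := ∀ a : C, IsCompactElement a → IsPure (ann a)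

variable (C) in
/-- `C` is PP if `a⊥` is complemented for every compact `a`. -/
def PP : Prop := ∀ a : C, IsCompactElement a → IsComplEl (ann a)

/-- `O(p) := ⨆ {a compact | a⊥ ≰ p}`. -/
def O (p : C) : C := sSup {a : C | IsCompactElement a ∧ ¬ ann a ≤ p}

variable (C) in
/-- `C` is normal. -/
def Normal : Prop := ∀ t u : C, t ⊔ u = ⊤ →
  ∃ a b : C, t ⊔ a = ⊤ ∧ u ⊔ b = ⊤ ∧ comm a b = ⊥

variable (C) in
/-- `C` is B-normal. -/
def BNormal : Prop := ∀ t u : C, t ⊔ u = ⊤ →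
  ∃ a b : C, IsComplEl a ∧ IsComplEl b ∧ t ⊔ a = ⊤ ∧ u ⊔ b = ⊤ ∧ comm a b = ⊥

variable (C) in
/-- `C` is purified. -/
def Purified : Prop := ∀ p q : C, IsMinPrime p → IsMinPrime q → p ≠ q →
  ∃ a : C, IsComplEl a ∧ a ≤ p ∧ ann a ≤ q

variable (C) in
/-- The prime spectrum of `C`. -/
abbrev Spec := {p : C // IsPrime p}

variable (C) in
/-- The Zariski topology on `Spec C`: the closed sets are the `V(t) = {p | t ≤ p}`,
equivalently the topology generated by the sets `D(t) = {p | t ≰ p}`. -/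
def zariskiTop : TopologicalSpace (Spec C) :=
  TopologicalSpace.generateFrom {U : Set (Spec C) | ∃ t : C, U = {p : Spec C | ¬ t ≤ p.1}}

variable (C) in
/-- The flat topology on `Spec C`: generated by the open basis `V(a)`, `a` compact. -/
def flatTop : TopologicalSpace (Spec C) :=
  TopologicalSpace.generateFrom
    {U : Set (Spec C) | ∃ a : C, IsCompactElement a ∧ U = {p : Spec C | a ≤ p.1}}

open Topology

instance : IsCompactlyGenerated C := ⟨compactlyGenerated⟩

instance : IsCoatomic C := coatomic_of_top_compact top_isCompact

lemma comm_sup_left (a b c : C) : comm (a ⊔ b) c = comm a c ⊔ comm b c := by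
  rw [← sSup_pair, comm_sSup, iSup_pair]

lemma comm_le_comm {a b c d : C} (hab : a ≤ b) (hcd : c ≤ d) : comm a c ≤ comm b d := by
  have comm_mono_left : ∀ {x y : C} (z : C), x ≤ y → comm x z ≤ comm y z := fun z hxy => by
    rw [← sup_eq_right.2 hxy, comm_sup_left]; exact le_sup_left
  calc comm a c ≤ comm b c := comm_mono_left c hab
    _ = comm c b := comm_comm b c
    _ ≤ comm d b := comm_mono_left b hcd
    _ = comm b d := comm_comm d b

lemma comm_sup_sup_le (p a b : C) : comm (p ⊔ a) (p ⊔ b) ≤ p ⊔ comm a b := by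
  rw [comm_sup_left, comm_comm a, comm_sup_left, comm_comm b a]
  exact sup_le ((comm_le_inf _ _).trans (inf_le_left.trans le_sup_left))
    (sup_le ((comm_le_inf _ _).trans (inf_le_left.trans le_sup_left)) le_sup_right)

lemma IsPrime.comm_le_iff {p a b : C} (hp : IsPrime p) : comm a b ≤ p ↔ a ≤ p ∨ b ≤ p :=
  ⟨hp.2 a b, fun h => h.elim (fun ha => (comm_le_inf a b).trans (inf_le_left.trans ha))
    fun hb => (comm_le_inf a b).trans (inf_le_right.trans hb)⟩

lemma IsPrime.le_or_le_of_inf_le {p a b : C} (hp : IsPrime p) (h : a ⊓ b ≤ p) : a ≤ p ∨ b ≤ p :=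
  hp.comm_le_iff.1 ((comm_le_inf a b).trans h)

lemma IsPrime.not_le_of_sup_eq_top {p a b : C} (hp : IsPrime p) (hab : a ⊔ b = ⊤) (hb : b ≤ p) :
    ¬ a ≤ p :=
  fun ha => hp.1 (top_le_iff.1 (hab ▸ sup_le ha hb))

lemma isPrime_of_isCoatom {p : C} (hp : IsCoatom p) : IsPrime p := by
  refine ⟨hp.ne_top, fun a b hab => ?_⟩
  by_contra! h
  have hsup : ∀ {x}, ¬ x ≤ p → p ⊔ x = ⊤ := fun hx =>
    codisjoint_iff.1 (hp.not_le_iff_codisjoint.1 hx)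
  have := comm_sup_sup_le p a b
  rw [hsup h.1, hsup h.2, comm_top] at this
  exact hp.ne_top (top_le_iff.1 (this.trans (sup_le le_rfl hab)))

lemma exists_compact_le_sup_eq_top {a p : C} (h : a ⊔ p = ⊤) :
    ∃ b, IsCompactElement b ∧ b ≤ p ∧ a ⊔ b = ⊤ := by
  classical
  obtain ⟨t, ht, htop⟩ := (isCompactElement_iff_exists_le_sSup_of_le_sSup (k := (⊤ : C))).1
    top_isCompact (insert a {c | IsCompactElement c ∧ c ≤ p})
    (by rw [sSup_insert, sSup_compact_le_eq, h])
  have hmem : ∀ c ∈ t.filter (· ≠ a), IsCompactElement c ∧ c ≤ p := fun c hc =>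
    (ht (Finset.mem_filter.1 hc).1).resolve_left (Finset.mem_filter.1 hc).2
  refine ⟨(t.filter (· ≠ a)).sup id, isCompactElement_finsetSup _ fun c hc => (hmem c hc).1,
    Finset.sup_le fun c hc => (hmem c hc).2,
    top_le_iff.1 (htop.trans (Finset.sup_le fun c hc => ?_))⟩
  by_cases hca : c = a
  · exact hca ▸ le_sup_left
  · exact le_sup_of_le_right (Finset.le_sup (f := id) (Finset.mem_filter.2 ⟨hc, hca⟩))

lemma exists_le_maximal_avoiding {α : Type*} [CompleteLattice α] {S : Set α}
    (hS : ∀ x ∈ S, IsCompactElement x) {y : α} (hy : ∀ x ∈ S, ¬ x ≤ y) :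
    ∃ m, y ≤ m ∧ Maximal (fun z => ∀ x ∈ S, ¬ x ≤ z) m := by
  refine zorn_le_nonempty₀ {z | ∀ x ∈ S, ¬ x ≤ z} (fun c hcS hc z hz => ?_) y hy
  refine ⟨sSup c, fun x hx hxc => ?_, fun _ => le_sSup⟩
  obtain ⟨w, hwc, hxw⟩ := hS x hx c (sSup c) ⟨z, hz⟩ hc.directedOn (_root_.isLUB_sSup c) hxc
  exact hcS hwc x hx hxw

lemma isPrime_of_maximal_avoiding {S : Set C} (hcomm : ∀ x ∈ S, ∀ y ∈ S, comm x y ∈ S)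
    (hne : S.Nonempty) {m : C} (hm : Maximal (fun z => ∀ x ∈ S, ¬ x ≤ z) m) : IsPrime m := by
  obtain ⟨s, hs⟩ := hne
  refine ⟨fun h => hm.prop s hs (h ▸ le_top), fun a b hab => ?_⟩
  by_contra! h
  have hmeet : ∀ {d}, ¬ d ≤ m → ∃ x ∈ S, x ≤ m ⊔ d := fun hd => by
    by_contra! hx
    exact hd (le_sup_right.trans (hm.le_of_ge hx le_sup_left))
  obtain ⟨x, hxS, hxa⟩ := hmeet h.1
  obtain ⟨y, hyS, hyb⟩ := hmeet h.2
  exact hm.prop _ (hcomm x hxS y hyS)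
    ((comm_le_comm hxa hyb).trans ((comm_sup_sup_le m a b).trans (sup_le le_rfl hab)))

lemma setOf_isPrime_eq_setOf_isMaximal_iff :
    {p : C | IsPrime p} = {p | IsMaximal p} ↔ ∀ p : C, IsPrime p → IsCoatom p := by
  have hmax : ∀ {p : C}, IsMaximal p ↔ IsCoatom p := fun {p} =>
    ⟨fun h => ⟨h.1, fun q hpq => by_contra fun hq => hpq.ne (h.2 q hq hpq.le).symm⟩,
      fun h => ⟨h.1, fun _ hq hpq => (h.le_iff_eq hq).1 hpq⟩⟩
  refine ⟨fun h p hp => hmax.1 (h ▸ hp : p ∈ {p | IsMaximal p}), fun h => ?_⟩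
  ext p
  exact ⟨fun hp => hmax.2 (h p hp), fun hp => isPrime_of_isCoatom (hmax.1 hp)⟩

lemma isCoatom_of_isAntichain (h : IsAntichain (· ≤ ·) {p : C | IsPrime p}) {p : C}
    (hp : IsPrime p) : IsCoatom p := by
  obtain ⟨m, hm, hpm⟩ := (eq_top_or_exists_le_coatom p).resolve_left hp.1
  rwa [h.eq hp (isPrime_of_isCoatom hm) hpm]

/-- `V(hullDiff x a)` is the Zariski closure of `V(x) \ V(a)`. -/
def hullDiff (x a : C) : C := sInf {q : C | IsPrime q ∧ x ≤ q ∧ ¬ a ≤ q}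

lemma le_hullDiff (x a : C) : x ≤ hullDiff x a := le_sInf fun _ hq => hq.2.1

lemma hullDiff_self (a : C) : hullDiff a a = ⊤ := sInf_eq_top.2 fun _ hq => absurd hq.2.1 hq.2.2

lemma hullDiff_comm (x y a : C) : hullDiff (comm x y) a = hullDiff x a ⊓ hullDiff y a := by
  rw [hullDiff, hullDiff, hullDiff, ← sInf_union]
  congr 1
  ext q
  simp only [Set.mem_ofPred_eq, Set.mem_union]
  constructor
  · rintro ⟨hq, hxy, ha⟩
    exact (hq.comm_le_iff.1 hxy).imp (fun hx => ⟨hq, hx, ha⟩) fun hy => ⟨hq, hy, ha⟩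
  · rintro (⟨hq, hx, ha⟩ | ⟨hq, hy, ha⟩)
    exacts [⟨hq, hq.comm_le_iff.2 (Or.inl hx), ha⟩, ⟨hq, hq.comm_le_iff.2 (Or.inr hy), ha⟩]

theorem le_iff_not_hullDiff_bot_le (hmax : ∀ q : C, IsPrime q → IsCoatom q) {a p : C}
    (ha : IsCompactElement a) (hp : IsPrime p) : a ≤ p ↔ ¬ hullDiff ⊥ a ≤ p := by
  refine ⟨fun hap hbot => ?_, fun h => by_contra fun hap => h (sInf_le ⟨hp, bot_le, hap⟩)⟩
  set S := {x : C | IsCompactElement x ∧ ¬ hullDiff x a ≤ p}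
  have haS : a ∈ S := ⟨ha, by rw [hullDiff_self]; exact fun h => hp.1 (top_le_iff.1 h)⟩
  have hScomm : ∀ x ∈ S, ∀ y ∈ S, comm x y ∈ S := fun x hx y hy =>
    ⟨comm_isCompact x y hx.1 hy.1, by
      rw [hullDiff_comm]; exact fun h => (hp.le_or_le_of_inf_le h).elim hx.2 hy.2⟩
  have hSbot : ∀ x ∈ S, ¬ x ≤ ⊥ := fun x hx hx0 => hx.2 (le_bot_iff.1 hx0 ▸ hbot)
  obtain ⟨m, -, hm⟩ := exists_le_maximal_avoiding (fun x hx => hx.1) hSbot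
  have hmp : m ≤ p := le_iff_compact_le_imp.2 fun c hc hcm =>
    by_contra fun hcp => hm.prop c ⟨hc, fun h => hcp ((le_hullDiff c a).trans h)⟩ hcm
  have hmprime : IsPrime m := isPrime_of_maximal_avoiding hScomm ⟨a, haS⟩ hm
  have hpm : p = m := ((hmax m hmprime).le_iff_eq hp.1).1 hmp
  exact hm.prop a haS (hpm ▸ hap)

lemma isOpen_zariskiTop_compl_V (t : C) : IsOpen[zariskiTop C] {p : Spec C | ¬ t ≤ p.1} :=
  TopologicalSpace.isOpen_generateFrom_of_mem ⟨t, rfl⟩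

lemma isOpen_flatTop_V {a : C} (ha : IsCompactElement a) :
    IsOpen[flatTop C] {p : Spec C | a ≤ p.1} :=
  TopologicalSpace.isOpen_generateFrom_of_mem ⟨a, ha, rfl⟩

lemma isLowerSet_of_isOpen_zariskiTop {U : Set (Spec C)} (hU : IsOpen[zariskiTop C] U) :
    IsLowerSet U :=
  (le_generateFrom (t := Topology.lowerSet (Spec C)) (by
    rintro _ ⟨t, rfl⟩ p q hqp hp htq
    exact hp (htq.trans hqp)) : Topology.lowerSet (Spec C) ≤ zariskiTop C) U hU

lemma isUpperSet_of_isOpen_flatTop {U : Set (Spec C)} (hU : IsOpen[flatTop C] U) :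
    IsUpperSet U :=
  (le_generateFrom (t := Topology.upperSet (Spec C)) (by
    rintro _ ⟨a, -, rfl⟩ p q hpq hp
    exact hp.trans hpq) : Topology.upperSet (Spec C) ≤ flatTop C) U hU

lemma isAntichain_of_t2Space (h : @T2Space (Spec C) (zariskiTop C)) :
    IsAntichain (· ≤ ·) {p : C | IsPrime p} := by
  let := zariskiTop C
  intro p hp q hq hne hpq
  have hU := isLowerSet_of_isOpen_zariskiTop (isOpen_compl_singleton (x := (⟨p, hp⟩ : Spec C)))
  exact hU (show (⟨p, hp⟩ : Spec C) ≤ ⟨q, hq⟩ from hpq)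
    (fun hqp => hne (congrArg Subtype.val hqp).symm) rfl

lemma isAntichain_of_zariskiTop_eq_flatTop (h : zariskiTop C = flatTop C) :
    IsAntichain (· ≤ ·) {p : C | IsPrime p} := by
  intro p hp q hq hne hpq
  have hU := isUpperSet_of_isOpen_flatTop (h ▸ isOpen_zariskiTop_compl_V q)
  exact hU (show (⟨p, hp⟩ : Spec C) ≤ ⟨q, hq⟩ from hpq)
    (fun hqp => hne (le_antisymm hpq hqp)) le_rfl

theorem zariskiTop_eq_flatTop (hmax : ∀ p : C, IsPrime p → IsCoatom p) :
    zariskiTop C = flatTop C := by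
  apply le_antisymm
  · refine le_generateFrom ?_
    rintro _ ⟨a, ha, rfl⟩
    convert isOpen_zariskiTop_compl_V (hullDiff ⊥ a) using 1
    ext p
    exact le_iff_not_hullDiff_bot_le hmax ha p.2
  · refine le_generateFrom ?_
    rintro _ ⟨t, rfl⟩
    let := flatTop C
    refine isOpen_iff_forall_mem_open.2 fun p hp => ?_
    obtain ⟨a, ha, hat, hap⟩ : ∃ a, IsCompactElement a ∧ a ≤ t ∧ ¬ a ≤ p.1 := by
      simpa [le_iff_compact_le_imp (a := t)] using hp
    obtain ⟨b, hb, hbp, hab⟩ := exists_compact_le_sup_eq_top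
      (codisjoint_iff.1 ((hmax _ p.2).not_le_iff_codisjoint.1 hap).symm)
    exact ⟨{q | b ≤ q.1}, fun q hbq htq => q.2.not_le_of_sup_eq_top hab hbq (hat.trans htq),
      isOpen_flatTop_V hb, hbp⟩

theorem t2Space_zariskiTop (hmax : ∀ p : C, IsPrime p → IsCoatom p) :
    @T2Space (Spec C) (zariskiTop C) := by
  rw [zariskiTop_eq_flatTop hmax]
  refine @T2Space.mk _ (flatTop C) fun p q hne => ?_
  obtain ⟨b, hb, hbq, hpb⟩ := exists_compact_le_sup_eq_top
    ((hmax _ p.2).sup_eq_top_of_ne (hmax _ q.2) (Subtype.val_injective.ne hne))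
  obtain ⟨a, ha, hap, hba⟩ := exists_compact_le_sup_eq_top (sup_comm p.1 b ▸ hpb)
  exact ⟨{r | a ≤ r.1}, {r | b ≤ r.1}, isOpen_flatTop_V ha, isOpen_flatTop_V hb, hap, hbq,
    Set.disjoint_left.2 fun r hra hrb => r.2.not_le_of_sup_eq_top hba hra hrb⟩

theorem statement8 :
    ({p : C | IsPrime p} = {p : C | IsMaximal p} ↔ @T2Space (Spec C) (zariskiTop C)) ∧
    (@T2Space (Spec C) (zariskiTop C) ↔ zariskiTop C = flatTop C) := by
  rw [setOf_isPrime_eq_setOf_isMaximal_iff]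
  have of_t2 : @T2Space (Spec C) (zariskiTop C) → ∀ p : C, IsPrime p → IsCoatom p :=
    fun h _ => isCoatom_of_isAntichain (isAntichain_of_t2Space h)
  exact ⟨⟨t2Space_zariskiTop, of_t2⟩, fun h => zariskiTop_eq_flatTop (of_t2 h),
    fun h => t2Space_zariskiTop fun _ =>
      isCoatom_of_isAntichain (isAntichain_of_zariskiTop_eq_flatTop h)⟩

end CommutatorLattice
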